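/- Let x, x̃ ∈ X, let z★ be a longest common subsequence of x and x̃, let ε★ ∈ E(x) and ε̃★ ∈ E(x̃) satisfy apply(x, ε★) = apply(x̃, ε̃★) = z★, and let ψ, ψ̃ ∈ (0,1). Then for every base classifier f̄ : X → Y and class y ∈ Y, p_y(x̃; f̄, ψ̃) ≤ (ψ̃^{|x̃|} / ψ^{|x|}) · Σ_{ε ∈ E(x, ε★)} ρ(ψ, ψ̃)^{|ε|} · s_{f̄,ψ}(ε, x) + 1 − ψ̃^{|x̃| − |z★|}, where ρ(ψ, ψ̃) := ψ(1−ψ̃)/(ψ̃(1−ψ)). -/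

import Mathlib

/-- Apply a deletion indicator: keep the tokens at positions `i` with `ε i = true`, in order. -/
def applyDel {Ω : Type*} (x : List Ω) (ε : Fin x.length → Bool) : List Ω :=
  (List.finRange x.length).filterMap fun i => if ε i then some (x.get i) else none

/-- Number of retained tokens `|ε|`. -/
def retained {n : ℕ} (ε : Fin n → Bool) : ℕ :=
  (Finset.univ.filter fun i => ε i = true).card

/-- `q_ψ(ε|x) = ψ^{|x|-|ε|} (1-ψ)^{|ε|}`. -/
noncomputable def qdel {Ω : Type*} (ψ : ℝ) (x : List Ω) (ε : Fin x.length → Bool) : ℝ :=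
  ψ ^ (x.length - retained ε) * (1 - ψ) ^ (retained ε)

/-- The score `s_{f̄,ψ}(ε, x) = q_ψ(ε|x)·1[f̄(apply(x,ε)) = y]`. -/
noncomputable def score {Ω Y : Type*} [DecidableEq Y] (f : List Ω → Y) (y : Y) (ψ : ℝ)
    (x : List Ω) (ε : Fin x.length → Bool) : ℝ :=
  qdel ψ x ε * (if f (applyDel x ε) = y then 1 else 0)

/-- The smoothed class probability `p_y(x; f̄, ψ) = Σ_{ε ∈ E(x)} s_{f̄,ψ}(ε, x)`. -/
noncomputable def smoothedProb {Ω Y : Type*} [DecidableEq Y] (f : List Ω → Y) (y : Y)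
    (ψ : ℝ) (x : List Ω) : ℝ :=
  ∑ ε : Fin x.length → Bool, score f y ψ x ε

/-- `z` is a longest common subsequence of `x` and `x̃`. -/
def IsLCS {Ω : Type*} (z x xt : List Ω) : Prop :=
  z.Sublist x ∧ z.Sublist xt ∧ ∀ w : List Ω, w.Sublist x → w.Sublist xt → w.length ≤ z.length

/-!
The indicators `ε ⊑ ε★` on `x` and `ε̃ ⊑ ε̃★` on `x̃` are both in bijection with all indicators `δ`
on `z★`, by forgetting the positions that `ε★` (resp. `ε̃★`) deletes; this preserves `|·|` and the
retained subsequence. Since `ψ̃^{|x̃|} / ψ^{|x|} · ρ^k · q_ψ` is exactly the rate-`ψ̃` weight of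
`k` retained tokens on `x̃`, the part of `p_y(x̃)` coming from `ε̃ ⊑ ε̃★` is the first term. Those
`ε̃` carry total mass `ψ̃^{|x̃| - |z★|}` (binomial theorem on `z★`), so all other `ε̃` contribute
at most `1 - ψ̃^{|x̃| - |z★|}`.
-/

open Finset

lemma retained_le {n : ℕ} (ε : Fin n → Bool) : retained ε ≤ n :=
  (card_filter_le _ _).trans_eq (card_fin n)

lemma retained_cons {n : ℕ} (c : Bool) (ε : Fin n → Bool) :
    retained (Fin.cons c ε : Fin (n + 1) → Bool) = c.toNat + retained ε := by
  simp only [retained, card_filter, Fin.sum_univ_succ, Fin.cons_zero, Fin.cons_succ]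
  cases c <;> rfl

lemma forall_cons_le_cons_iff {n : ℕ} {c d : Bool} {ε t : Fin n → Bool} :
    (∀ j, (Fin.cons c ε : Fin (n + 1) → Bool) j ≤ (Fin.cons d t : Fin (n + 1) → Bool) j) ↔
      c ≤ d ∧ ∀ j, ε j ≤ t j :=
  Fin.cons_le_cons

lemma sum_bool_tuple_succ {M : Type*} [AddCommMonoid M] {n : ℕ}
    (F : (Fin (n + 1) → Bool) → M) :
    ∑ ε, F ε = ∑ ε : Fin n → Bool, (F (Fin.cons false ε) + F (Fin.cons true ε)) := by
  rw [← (Fin.consEquiv fun _ => Bool).sum_comp, Fintype.sum_prod_type, Fintype.sum_bool,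
    ← sum_add_distrib]
  exact sum_congr rfl fun _ _ => add_comm _ _

lemma sum_pow_sub_retained_mul_one_sub_pow (ψ : ℝ) (n : ℕ) :
    ∑ ε : Fin n → Bool, ψ ^ (n - retained ε) * (1 - ψ) ^ retained ε = 1 := by
  induction n with
  | zero => simp [retained]
  | succ n ih =>
    rw [sum_bool_tuple_succ]
    refine (sum_congr rfl fun ε _ => ?_).trans ih
    have hε := retained_le ε
    simp only [retained_cons, Bool.toNat_false, Bool.toNat_true, zero_add]
    rw [show n + 1 - retained ε = n - retained ε + 1 by omega,
      show n + 1 - (1 + retained ε) = n - retained ε by omega]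
    ring

lemma sum_pow_sub_retained_mul_one_sub_pow_of_le (ψ : ℝ) {m n : ℕ} (hmn : m ≤ n) :
    ∑ δ : Fin m → Bool, ψ ^ (n - retained δ) * (1 - ψ) ^ retained δ = ψ ^ (n - m) := by
  calc ∑ δ : Fin m → Bool, ψ ^ (n - retained δ) * (1 - ψ) ^ retained δ
      = ψ ^ (n - m) * ∑ δ : Fin m → Bool, ψ ^ (m - retained δ) * (1 - ψ) ^ retained δ := by
        rw [mul_sum]
        refine sum_congr rfl fun δ _ => ?_
        rw [← mul_assoc, ← pow_add, Nat.sub_add_sub_cancel hmn (retained_le δ)]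
    _ = ψ ^ (n - m) := by rw [sum_pow_sub_retained_mul_one_sub_pow, mul_one]

section applyDel

variable {Ω : Type*}

lemma applyDel_cons (a : Ω) (x : List Ω) (c : Bool) (ε : Fin x.length → Bool) :
    applyDel (a :: x) (Fin.cons c ε : Fin (x.length + 1) → Bool)
      = if c then a :: applyDel x ε else applyDel x ε := by
  show (List.finRange (x.length + 1)).filterMap _ = _
  rw [List.finRange_succ, List.filterMap_cons, List.filterMap_map]
  cases c <;> simp [applyDel]

lemma length_applyDel_le (x : List Ω) (ε : Fin x.length → Bool) :
    (applyDel x ε).length ≤ x.length :=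
  (List.length_filterMap_le _ _).trans_eq List.length_finRange

lemma sum_le_eq_sum_of_applyDel_eq {M : Type*} [AddCommMonoid M] (g : ℕ → List Ω → M)
    (x : List Ω) (es : Fin x.length → Bool) (zs : List Ω) (h : applyDel x es = zs) :
    ∑ ε with ∀ j, ε j ≤ es j, g (retained ε) (applyDel x ε)
      = ∑ δ : Fin zs.length → Bool, g (retained δ) (applyDel zs δ) := by
  induction x generalizing g zs with
  | nil =>
    subst h
    rfl
  | cons a x ih =>
    obtain ⟨c, t, rfl⟩ : ∃ c t, es = (Fin.cons c t : Fin (x.length + 1) → Bool) :=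
      ⟨_, _, (Fin.cons_self_tail es).symm⟩
    change ∑ ε : Fin (x.length + 1) → Bool with
      ∀ j, ε j ≤ (Fin.cons c t : Fin (x.length + 1) → Bool) j,
      g (retained ε) (applyDel (a :: x) ε) = _
    rw [sum_filter, sum_bool_tuple_succ]
    simp only [forall_cons_le_cons_iff, retained_cons, applyDel_cons, Bool.toNat_false,
      Bool.toNat_true, zero_add, Bool.false_le, true_and, if_true, Bool.false_eq_true, if_false]
    rw [applyDel_cons] at h
    cases c
    · simp only [Bool.false_eq_true, if_false, show ¬(true ≤ false) by decide, false_and,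
        add_zero] at h ⊢
      rw [← ih g t zs h, sum_filter]
    · simp only [if_true, le_rfl, true_and] at h ⊢
      subst h
      change _ = ∑ δ : Fin ((applyDel x t).length + 1) → Bool, _
      rw [sum_bool_tuple_succ, sum_add_distrib, sum_add_distrib]
      simp only [retained_cons, applyDel_cons, Bool.toNat_false, Bool.toNat_true, zero_add,
        if_true, Bool.false_eq_true, if_false]
      rw [← ih g t _ rfl, ← ih (fun k l => g (1 + k) (a :: l)) t _ rfl, sum_filter, sum_filter]

end applyDel

lemma div_pow_mul_ratio_pow_mul_eq {ψ ψt : ℝ} (hψ : ψ ≠ 0) (hψ' : 1 - ψ ≠ 0) (hψt : ψt ≠ 0)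
    {k m n : ℕ} (hkm : k ≤ m) (hkn : k ≤ n) :
    ψt ^ n / ψ ^ m * ((ψ * (1 - ψt) / (ψt * (1 - ψ))) ^ k * (ψ ^ (m - k) * (1 - ψ) ^ k))
      = ψt ^ (n - k) * (1 - ψt) ^ k := by
  rw [pow_sub₀ ψ hψ hkm, pow_sub₀ ψt hψt hkn, div_pow, mul_pow, mul_pow]
  field_simp

section smoothing

variable {Ω Y : Type*} [DecidableEq Y]

lemma qdel_nonneg {ψ : ℝ} (hψ0 : 0 ≤ ψ) (hψ1 : ψ ≤ 1) (x : List Ω) (ε : Fin x.length → Bool) :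
    0 ≤ qdel ψ x ε :=
  mul_nonneg (pow_nonneg hψ0 _) (pow_nonneg (sub_nonneg.2 hψ1) _)

lemma score_le_qdel (f : List Ω → Y) (y : Y) {ψ : ℝ} (hψ0 : 0 ≤ ψ) (hψ1 : ψ ≤ 1)
    (x : List Ω) (ε : Fin x.length → Bool) : score f y ψ x ε ≤ qdel ψ x ε := by
  unfold score
  split_ifs
  · rw [mul_one]
  · rw [mul_zero]
    exact qdel_nonneg hψ0 hψ1 x ε

lemma smoothedProb_le_sum_filter_add_one_sub (f : List Ω → Y) (y : Y) {ψ : ℝ} (hψ0 : 0 ≤ ψ)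
    (hψ1 : ψ ≤ 1) (x : List Ω) (P : (Fin x.length → Bool) → Prop) [DecidablePred P] :
    smoothedProb f y ψ x ≤
      ∑ ε with P ε, score f y ψ x ε + (1 - ∑ ε with P ε, qdel ψ x ε) := by
  have htotal : ∑ ε with P ε, qdel ψ x ε + ∑ ε with ¬P ε, qdel ψ x ε = 1 := by
    rw [sum_filter_add_sum_filter_not]
    exact sum_pow_sub_retained_mul_one_sub_pow ψ x.length
  have hrest : ∑ ε with ¬P ε, score f y ψ x ε ≤ ∑ ε with ¬P ε, qdel ψ x ε :=
    sum_le_sum fun ε _ => score_le_qdel f y hψ0 hψ1 x ε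
  rw [smoothedProb, ← sum_filter_add_sum_filter_not univ P]
  linarith

lemma sum_le_qdel_eq (ψ : ℝ) (x : List Ω) (es : Fin x.length → Bool) (zs : List Ω)
    (h : applyDel x es = zs) :
    ∑ ε with ∀ j, ε j ≤ es j, qdel ψ x ε = ψ ^ (x.length - zs.length) :=
  (sum_le_eq_sum_of_applyDel_eq (fun k _ => ψ ^ (x.length - k) * (1 - ψ) ^ k) x es zs h).trans
    (sum_pow_sub_retained_mul_one_sub_pow_of_le ψ (h ▸ length_applyDel_le x es))

lemma sum_le_score_eq_of_applyDel_eq (f : List Ω → Y) (y : Y) {ψ ψt : ℝ} (hψ : ψ ≠ 0)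
    (hψ' : 1 - ψ ≠ 0) (hψt : ψt ≠ 0) (x xt zs : List Ω) (es : Fin x.length → Bool)
    (ets : Fin xt.length → Bool) (h : applyDel x es = zs) (ht : applyDel xt ets = zs) :
    ∑ ε with ∀ j, ε j ≤ ets j, score f y ψt xt ε
      = ψt ^ xt.length / ψ ^ x.length *
        ∑ ε with ∀ j, ε j ≤ es j,
          (ψ * (1 - ψt) / (ψt * (1 - ψ))) ^ retained ε * score f y ψ x ε := by
  have hzx : zs.length ≤ x.length := h ▸ length_applyDel_le x es
  have hzxt : zs.length ≤ xt.length := ht ▸ length_applyDel_le xt ets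
  calc ∑ ε with ∀ j, ε j ≤ ets j, score f y ψt xt ε
      = ∑ δ : Fin zs.length → Bool, ψt ^ (xt.length - retained δ) * (1 - ψt) ^ retained δ *
          if f (applyDel zs δ) = y then 1 else 0 :=
        sum_le_eq_sum_of_applyDel_eq (fun k l => ψt ^ (xt.length - k) * (1 - ψt) ^ k *
          if f l = y then 1 else 0) xt ets zs ht
    _ = ψt ^ xt.length / ψ ^ x.length * ∑ δ : Fin zs.length → Bool,
          (ψ * (1 - ψt) / (ψt * (1 - ψ))) ^ retained δ *
            (ψ ^ (x.length - retained δ) * (1 - ψ) ^ retained δ *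
              if f (applyDel zs δ) = y then 1 else 0) := by
        rw [mul_sum]
        refine sum_congr rfl fun δ _ => ?_
        have hδ := retained_le δ
        rw [← div_pow_mul_ratio_pow_mul_eq hψ hψ' hψt (hδ.trans hzx) (hδ.trans hzxt)]
        ring
    _ = _ :=
        congrArg (ψt ^ xt.length / ψ ^ x.length * ·) (sum_le_eq_sum_of_applyDel_eq
          (fun k l => (ψ * (1 - ψt) / (ψt * (1 - ψ))) ^ k *
            (ψ ^ (x.length - k) * (1 - ψ) ^ k * if f l = y then 1 else 0)) x es zs h).symm

end smoothing

theorem stmt8_general {Ω Y : Type*} [DecidableEq Y] (x xt zs : List Ω)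
    (es : Fin x.length → Bool) (ets : Fin xt.length → Bool)
    (h1 : applyDel x es = zs) (h2 : applyDel xt ets = zs)
    (ψ ψt : ℝ) (hψ : ψ ∈ Set.Ioo (0 : ℝ) 1) (hψt : ψt ∈ Set.Ioo (0 : ℝ) 1)
    (f : List Ω → Y) (y : Y) :
    smoothedProb f y ψt xt ≤
      ψt ^ xt.length / ψ ^ x.length *
        (∑ ε ∈ Finset.univ.filter (fun ε : Fin x.length → Bool => ∀ j, ε j ≤ es j),
          (ψ * (1 - ψt) / (ψt * (1 - ψ))) ^ retained ε * score f y ψ x ε) +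
      1 - ψt ^ (xt.length - zs.length) := by
  obtain ⟨hψ0, hψ1⟩ := hψ
  obtain ⟨hψt0, hψt1⟩ := hψt
  have key := smoothedProb_le_sum_filter_add_one_sub f y hψt0.le hψt1.le xt
    (fun ε => ∀ j, ε j ≤ ets j)
  rw [sum_le_score_eq_of_applyDel_eq f y hψ0.ne' (sub_ne_zero.2 hψ1.ne') hψt0.ne' x xt zs es ets
    h1 h2, sum_le_qdel_eq ψt xt ets zs h2] at key
  linarith

/-- upper bound on the smoothed class probability at a neighboring input. -/
theorem stmt8 {Ω Y : Type*} [DecidableEq Y] (x xt zs : List Ω)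
    (es : Fin x.length → Bool) (ets : Fin xt.length → Bool)
    (hz : IsLCS zs x xt)
    (h1 : applyDel x es = zs) (h2 : applyDel xt ets = zs)
    (ψ ψt : ℝ) (hψ : ψ ∈ Set.Ioo (0 : ℝ) 1) (hψt : ψt ∈ Set.Ioo (0 : ℝ) 1)
    (f : List Ω → Y) (y : Y) :
    smoothedProb f y ψt xt ≤
      ψt ^ xt.length / ψ ^ x.length *
        (∑ ε ∈ Finset.univ.filter (fun ε : Fin x.length → Bool => ∀ j, ε j ≤ es j),
          (ψ * (1 - ψt) / (ψt * (1 - ψ))) ^ retained ε * score f y ψ x ε) +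
      1 - ψt ^ (xt.length - zs.length) :=
  stmt8_general x xt zs es ets h1 h2 ψ ψt hψ hψt f y
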